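/- Define the assignment: element i ∈ U goes to U1 if vertex v^{U,i}_2 is visited after v^{U,i}_3 on a Hamiltonian cycle, and to U2 otherwise. This assignment is a well-defined total function from U to {1, 2} for any Hamiltonian cycle of the converted graph, because in the converted graph every Hamiltonian cycle visits v^{U,i}_2 and v^{U,i}_3 consecutively (in one of the two orders), as v^{U,i}_2 and v^{U,i}_3 are connected by edges in both directions and v^{U,i}_1 has out-neighbors exactly {v^{U,i}_2, v^{U,i}_3}. -/

import Mathlib

/-! A Hamiltonian cycle enters `v2` and `v3` from in-neighbours, and it cannot enter both from
`v1`, so it uses the edge `v3 → v2` or `v2 → v3`. It cannot use both, since then `v2, v3` would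
form a 2-cycle of the successor map that never reaches `v1`. -/

theorem Function.iterate_eq_or_eq_of_swap {α : Type*} {f : α → α} {a b : α}
    (hab : f a = b) (hba : f b = a) (n : ℕ) : f^[n] a = a ∨ f^[n] a = b := by
  induction n with
  | zero => exact Or.inl rfl
  | succ n ih =>
    rw [Function.iterate_succ_apply']
    rcases ih with h | h <;> simp [h, hab, hba]

theorem Function.not_swap_of_iterate_eq {α : Type*} {f : α → α} {a b c : α}
    (hca : c ≠ a) (hcb : c ≠ b) {n : ℕ} (hn : f^[n] a = c) : ¬(f a = b ∧ f b = a) := by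
  rintro ⟨hab, hba⟩
  rcases Function.iterate_eq_or_eq_of_swap hab hba n with h | h
  · exact hca (hn.symm.trans h)
  · exact hcb (hn.symm.trans h)

theorem Equiv.Perm.apply_eq_or_apply_eq_of_symm_apply {α : Type*} {σ : Equiv.Perm α}
    {a b c : α} (hbc : b ≠ c) (hb : σ.symm b = a ∨ σ.symm b = c)
    (hc : σ.symm c = a ∨ σ.symm c = b) : σ c = b ∨ σ b = c := by
  rcases hb with hb | hb
  · rcases hc with hc | hc
    · exact absurd (σ.symm.injective (hb.trans hc.symm)) hbc
    · exact Or.inr (σ.symm_apply_eq.mp hc).symm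
  · exact Or.inl (σ.symm_apply_eq.mp hb).symm

theorem stmt_19_general {V : Type*} (E : V → V → Prop) (v1 v2 v3 : V)
    (h12 : v1 ≠ v2) (h13 : v1 ≠ v3) (h23 : v2 ≠ v3)
    (hin2 : ∀ w, E w v2 ↔ (w = v1 ∨ w = v3))
    (hin3 : ∀ w, E w v3 ↔ (w = v1 ∨ w = v2))
    (σ : Equiv.Perm V) (hE : ∀ x, E x (σ x))
    (hcyc : ∀ x y : V, ∃ n : ℕ, (⇑σ)^[n] x = y) :
    Xor' (σ v3 = v2) (σ v2 = v3) := by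
  have hpred : ∀ w, E (σ.symm w) w := fun w => by simpa using hE (σ.symm w)
  have hone : σ v3 = v2 ∨ σ v2 = v3 :=
    Equiv.Perm.apply_eq_or_apply_eq_of_symm_apply h23 ((hin2 _).1 (hpred v2))
      ((hin3 _).1 (hpred v3))
  obtain ⟨n, hn⟩ := hcyc v2 v1
  have hnotboth : ¬(σ v2 = v3 ∧ σ v3 = v2) := Function.not_swap_of_iterate_eq h12 h13 hn
  exact (xor_iff_or_and_not_and _ _).mpr ⟨hone, fun h => hnotboth h.symm⟩

/-- In the element component of the converted graph, v1's
out-neighbors are exactly {v2, v3}, and v2 and v3 have in-neighbors exactly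
{v1, each other}. Consequently every Hamiltonian cycle visits v2 and v3
consecutively in exactly one of the two orders, so the assignment of element i
to partition U1 or U2 (according to whether v2 is visited after v3 or not) is
a well-defined total function. -/
theorem stmt_19 {V : Type*} (E : V → V → Prop) (v1 v2 v3 : V)
    (h12 : v1 ≠ v2) (h13 : v1 ≠ v3) (h23 : v2 ≠ v3)
    (hout1 : ∀ w, E v1 w ↔ (w = v2 ∨ w = v3))
    (hin2 : ∀ w, E w v2 ↔ (w = v1 ∨ w = v3))
    (hin3 : ∀ w, E w v3 ↔ (w = v1 ∨ w = v2))
    (σ : Equiv.Perm V) (hE : ∀ x, E x (σ x))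
    (hcyc : ∀ x y : V, ∃ n : ℕ, (⇑σ)^[n] x = y) :
    Xor' (σ v3 = v2) (σ v2 = v3) :=
  stmt_19_general E v1 v2 v3 h12 h13 h23 hin2 hin3 σ hE hcyc
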